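/- arXiv:2311.13227 — 4 statements merged into one kernel-verified Lean document; each statement's English description precedes it below -/
import Mathlib

section
/- Let t, n be positive integers, let c_1, …, c_t > 0 satisfy ∑_{α=1}^t c_α = 1, let z_0, a_1, …, a_t be complex numbers with z_0 ≠ a_α for all α, set f_α = |z_0 − a_α|², let τ > 0 satisfy ∑_{α=1}^t c_α/f_α ≥ 1/τ, and let t_0 ≥ 0 satisfy ∑_{α=1}^t c_α/(f_α + t_0) = 1/τ. Then for every n×n complex positive semidefinite Hermitian matrix H one has ∑_{α=1}^t c_α · log det(f_α·I_n + H) − (1/τ)·Tr(H) ≤ n·(∑_{α=1}^t c_α · log(f_α + t_0) − t_0/τ), with equality if and only if H = t_0·I_n. -/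
/-!
Diagonalizing `H` turns the objective into `∑ᵢ φ(λᵢ)` over its eigenvalues, where
`φ(x) = ∑ c_α log(f_α + x) − x/τ`. The equation defining `t₀` says `φ'(t₀) = 0`, so bounding each
`log` by its tangent line at `f_α + t₀` gives `φ(x) ≤ φ(t₀)`, strictly unless `x = t₀`; and a
Hermitian matrix equals `t₀ I` exactly when all its eigenvalues are `t₀`.
-/

open scoped BigOperators ComplexOrder

open Finset Matrix Unitary

lemma Real.log_le_log_add_sub_div {a b : ℝ} (ha : 0 < a) (hb : 0 < b) :
    Real.log a ≤ Real.log b + (a - b) / b := by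
  have h := Real.log_le_sub_one_of_pos (div_pos ha hb)
  rw [Real.log_div ha.ne' hb.ne'] at h
  rw [sub_div, div_self hb.ne']
  linarith

lemma Real.log_lt_log_add_sub_div {a b : ℝ} (ha : 0 < a) (hb : 0 < b) (hab : a ≠ b) :
    Real.log a < Real.log b + (a - b) / b := by
  have h := Real.log_lt_sub_one_of_pos (div_pos ha hb) (div_ne_one_of_ne hab)
  rw [Real.log_div ha.ne' hb.ne'] at h
  rw [sub_div, div_self hb.ne']
  linarith

section LogDetProfile

variable {ι : Type*} [Fintype ι]

/-- The scalar function whose sum over the eigenvalues of `H` is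
`∑ c_α log det(f_α I + H) − Tr H / τ`. -/
noncomputable def logDetProfile (c f : ι → ℝ) (τ x : ℝ) : ℝ :=
  ∑ α, c α * Real.log (f α + x) - x / τ

variable {c f : ι → ℝ} {τ x t₀ : ℝ}

/-- Since `logDetProfile` is stationary at `t₀`, its tangent-line majorant is constant. -/
lemma sum_mul_tangent_sub_div_eq (ht₀ : ∑ α, c α / (f α + t₀) = 1 / τ) :
    ∑ α, c α * (Real.log (f α + t₀) + (x - t₀) / (f α + t₀)) - x / τ =
      logDetProfile c f τ t₀ := by
  have hlin : ∑ α, c α * ((x - t₀) / (f α + t₀)) = (x - t₀) * ∑ α, c α / (f α + t₀) := by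
    rw [mul_sum]
    exact sum_congr rfl fun α _ => by ring
  simp only [mul_add, sum_add_distrib, hlin, ht₀, logDetProfile]
  ring

lemma logDetProfile_le (hc : ∀ α, 0 ≤ c α) (hx : ∀ α, 0 < f α + x) (ht : ∀ α, 0 < f α + t₀)
    (ht₀ : ∑ α, c α / (f α + t₀) = 1 / τ) :
    logDetProfile c f τ x ≤ logDetProfile c f τ t₀ := by
  rw [← sum_mul_tangent_sub_div_eq (x := x) ht₀, logDetProfile]
  refine sub_le_sub_right (sum_le_sum fun α _ => mul_le_mul_of_nonneg_left ?_ (hc α)) _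
  simpa using Real.log_le_log_add_sub_div (hx α) (ht α)

lemma logDetProfile_lt [Nonempty ι] (hc : ∀ α, 0 < c α) (hx : ∀ α, 0 < f α + x)
    (ht : ∀ α, 0 < f α + t₀) (ht₀ : ∑ α, c α / (f α + t₀) = 1 / τ) (hxt : x ≠ t₀) :
    logDetProfile c f τ x < logDetProfile c f τ t₀ := by
  rw [← sum_mul_tangent_sub_div_eq (x := x) ht₀, logDetProfile]
  refine sub_lt_sub_right (sum_lt_sum_of_nonempty univ_nonempty fun α _ => ?_) _
  refine mul_lt_mul_of_pos_left ?_ (hc α)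
  simpa using Real.log_lt_log_add_sub_div (hx α) (ht α) (by simpa using hxt)

lemma logDetProfile_eq_iff [Nonempty ι] (hc : ∀ α, 0 < c α) (hx : ∀ α, 0 < f α + x)
    (ht : ∀ α, 0 < f α + t₀) (ht₀ : ∑ α, c α / (f α + t₀) = 1 / τ) :
    logDetProfile c f τ x = logDetProfile c f τ t₀ ↔ x = t₀ :=
  ⟨fun h => by_contra fun hxt => (logDetProfile_lt hc hx ht ht₀ hxt).ne h, fun h => h ▸ rfl⟩

end LogDetProfile

namespace Matrix.IsHermitian

variable {𝕜 : Type*} [RCLike 𝕜] {n : Type*} [Fintype n] [DecidableEq n] {A : Matrix n n 𝕜}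

lemma smul_one_add_eq_conjStarAlgAut (hA : A.IsHermitian) (s : ℝ) :
    (s : 𝕜) • (1 : Matrix n n 𝕜) + A = conjStarAlgAut 𝕜 _ hA.eigenvectorUnitary
      (diagonal fun i => ((s + hA.eigenvalues i : ℝ) : 𝕜)) := by
  conv_lhs => rw [hA.spectral_theorem]
  rw [← map_one (conjStarAlgAut 𝕜 _ hA.eigenvectorUnitary), ← map_smul, ← map_add,
    smul_one_eq_diagonal, diagonal_add]
  simp

lemma det_smul_one_add (hA : A.IsHermitian) (s : ℝ) :
    ((s : 𝕜) • (1 : Matrix n n 𝕜) + A).det = ∏ i, ((s + hA.eigenvalues i : ℝ) : 𝕜) := by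
  rw [hA.smul_one_add_eq_conjStarAlgAut, conjStarAlgAut_apply, det_mul_comm, ← mul_assoc]
  simp

lemma eq_smul_one_iff (hA : A.IsHermitian) (s : ℝ) :
    A = (s : 𝕜) • (1 : Matrix n n 𝕜) ↔ ∀ i, hA.eigenvalues i = s := by
  rw [← (EquivLike.injective (conjStarAlgAut 𝕜 _ (star hA.eigenvectorUnitary))).eq_iff,
    hA.conjStarAlgAut_star_eigenvectorUnitary, map_smul, map_one, smul_one_eq_diagonal,
    diagonal_eq_diagonal_iff]
  simp

lemma sum_mul_log_det_sub_trace_eq {ι : Type*} [Fintype ι] (hA : A.IsHermitian)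
    (c f : ι → ℝ) (τ : ℝ) (hpos : ∀ α i, 0 < f α + hA.eigenvalues i) :
    ∑ α, c α * Real.log (RCLike.re ((f α : 𝕜) • (1 : Matrix n n 𝕜) + A).det) -
      (1 / τ) * RCLike.re A.trace =
      ∑ i, logDetProfile c f τ (hA.eigenvalues i) := by
  have hlog : ∀ α, Real.log (RCLike.re ((f α : 𝕜) • (1 : Matrix n n 𝕜) + A).det) =
      ∑ i, Real.log (f α + hA.eigenvalues i) := by
    intro α
    rw [hA.det_smul_one_add, ← RCLike.ofReal_prod, RCLike.ofReal_re,
      Real.log_prod fun i _ => (hpos α i).ne']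
  have htrace : RCLike.re A.trace = ∑ i, hA.eigenvalues i := by
    simp [hA.trace_eq_sum_eigenvalues]
  simp only [hlog, htrace, mul_sum, logDetProfile, sum_sub_distrib, div_eq_inv_mul, mul_one]
  rw [sum_comm]

end Matrix.IsHermitian

theorem stmt_0_general (t n : ℕ) (ht : 0 < t)
    (c : Fin t → ℝ) (hc : ∀ α, 0 < c α)
    (z0 : ℂ) (a : Fin t → ℂ) (hza : ∀ α, z0 ≠ a α)
    (f : Fin t → ℝ) (hf : ∀ α, f α = Complex.normSq (z0 - a α))
    (τ : ℝ)
    (t0 : ℝ) (ht0 : 0 ≤ t0) (ht0eq : ∑ α, c α / (f α + t0) = 1 / τ)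
    (L : Matrix (Fin n) (Fin n) ℂ → ℝ)
    (hL : ∀ H, L H =
      (∑ α, c α * Real.log (((f α : ℂ) • (1 : Matrix (Fin n) (Fin n) ℂ) + H).det.re))
        - (1 / τ) * H.trace.re)
    (R : ℝ)
    (hR : R = n * ((∑ α, c α * Real.log (f α + t0)) - t0 / τ)) :
    ∀ H : Matrix (Fin n) (Fin n) ℂ, H.PosSemidef →
      L H ≤ R ∧ (L H = R ↔ H = (t0 : ℂ) • (1 : Matrix (Fin n) (Fin n) ℂ)) := by
  intro H hH
  have : Nonempty (Fin t) := Fin.pos_iff_nonempty.mp ht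
  have hpos : ∀ α x, 0 ≤ x → 0 < f α + x := fun α x hx =>
    add_pos_of_pos_of_nonneg (hf α ▸ Complex.normSq_pos.2 (sub_ne_zero.2 (hza α))) hx
  have hpos_eig := fun α i => hpos α _ (hH.eigenvalues_nonneg i)
  have hLH : L H = ∑ i, logDetProfile c f τ (hH.1.eigenvalues i) :=
    (hL H).trans (hH.1.sum_mul_log_det_sub_trace_eq c f τ hpos_eig)
  have hRt : R = ∑ _i : Fin n, logDetProfile c f τ t0 := by
    rw [hR, sum_const, card_univ, Fintype.card_fin, nsmul_eq_mul, logDetProfile]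
  have hle : ∀ i ∈ univ, logDetProfile c f τ (hH.1.eigenvalues i) ≤ logDetProfile c f τ t0 :=
    fun i _ => logDetProfile_le (fun α => (hc α).le) (hpos_eig · i) (hpos · t0 ht0) ht0eq
  have hH_eq : H = (t0 : ℂ) • 1 ↔ ∀ i, hH.1.eigenvalues i = t0 := hH.1.eq_smul_one_iff t0
  rw [hLH, hRt, hH_eq, sum_eq_sum_iff_of_le hle]
  refine ⟨sum_le_sum hle, ?_⟩
  simp only [mem_univ, true_implies, logDetProfile_eq_iff hc (hpos_eig · _) (hpos · t0 ht0) ht0eq]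

/-- Lemma 2.5 (maximumY) of the paper: the function
`H ↦ ∑ c_α log det(f_α I + H) − (1/τ) Tr H` on positive semidefinite Hermitian
matrices attains its maximum only at `H = t₀ I`. -/
theorem stmt_0 (t n : ℕ) (ht : 0 < t) (hn : 0 < n)
    (c : Fin t → ℝ) (hc : ∀ α, 0 < c α) (hcsum : ∑ α, c α = 1)
    (z0 : ℂ) (a : Fin t → ℂ) (hza : ∀ α, z0 ≠ a α)
    (f : Fin t → ℝ) (hf : ∀ α, f α = Complex.normSq (z0 - a α))
    (τ : ℝ) (hτ : 0 < τ) (hineq : 1 / τ ≤ ∑ α, c α / f α)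
    (t0 : ℝ) (ht0 : 0 ≤ t0) (ht0eq : ∑ α, c α / (f α + t0) = 1 / τ)
    (L : Matrix (Fin n) (Fin n) ℂ → ℝ)
    (hL : ∀ H, L H =
      (∑ α, c α * Real.log (((f α : ℂ) • (1 : Matrix (Fin n) (Fin n) ℂ) + H).det.re))
        - (1 / τ) * H.trace.re)
    (R : ℝ)
    (hR : R = n * ((∑ α, c α * Real.log (f α + t0)) - t0 / τ)) :
    ∀ H : Matrix (Fin n) (Fin n) ℂ, H.PosSemidef →
      L H ≤ R ∧ (L H = R ↔ H = (t0 : ℂ) • (1 : Matrix (Fin n) (Fin n) ℂ)) :=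
  stmt_0_general t n ht c hc z0 a hza f hf τ t0 ht0 ht0eq L hL R hR
end

section
/- Let m be a positive integer, p a nonnegative integer, and c ≥ 0 a real number. Then ∫_{{v ∈ ℂ^m : ‖v‖² ≤ c}} (c − ‖v‖²)^p dv = π^m · (p!/(p+m)!) · c^{p+m}, where dv is Lebesgue measure on ℂ^m identified with ℝ^{2m} and ‖v‖² = ∑_{i=1}^m |v_i|². -/
/-!
Splitting every coordinate into its real and imaginary part identifies `ℂ^m` isometrically and
measure-preservingly with Euclidean `ℝ^{2m}`. The integrand is radial there, so polar coordinates
turn the integral into `2m · vol(B) · ∫₀^√c y^{2m-1} (c - y²)^p dy` with `vol(B) = π^m / m!`.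
The one-variable integrals `K n p = ∫₀^√c y^{2n+1} (c - y²)^p dy` satisfy
`K n (p+1) = c K n p - K (n+1) p`, and induction on `p` gives
`K n p = n! p! / (2 (n+p+1)!) c^{n+p+1}`.
-/

open MeasureTheory Set Real Module
open scoped Nat

theorem integral_pow_mul_sub_sq_pow {c : ℝ} (hc : 0 ≤ c) (n p : ℕ) :
    ∫ y in (0 : ℝ)..√c, y ^ (2 * n + 1) * (c - y ^ 2) ^ p
      = n ! * p ! / (2 * (n + p + 1)!) * c ^ (n + p + 1) := by
  induction p generalizing n with
  | zero =>
    have hsqrt : √c ^ (2 * n + 1 + 1) = c ^ (n + 1) := by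
      rw [show 2 * n + 1 + 1 = 2 * (n + 1) by ring, pow_mul, sq_sqrt hc]
    simp only [pow_zero, mul_one, integral_pow, hsqrt, Nat.factorial_succ]
    push_cast
    field_simp
    ring
  | succ p ih =>
    have hsplit : ∀ y : ℝ, y ^ (2 * n + 1) * (c - y ^ 2) ^ (p + 1)
        = c * (y ^ (2 * n + 1) * (c - y ^ 2) ^ p) - y ^ (2 * (n + 1) + 1) * (c - y ^ 2) ^ p := by
      intro y; ring
    simp_rw [hsplit]
    rw [intervalIntegral.integral_sub ((by fun_prop : Continuous _).intervalIntegrable _ _)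
      ((by fun_prop : Continuous _).intervalIntegrable _ _), intervalIntegral.integral_const_mul,
      ih, ih, show n + 1 + p + 1 = n + p + 1 + 1 by ring,
      show n + (p + 1) + 1 = n + p + 1 + 1 by ring, Nat.factorial_succ (n + p + 1),
      Nat.factorial_succ n, Nat.factorial_succ p]
    push_cast
    field_simp
    ring

section InnerProductSpace

variable {E : Type*} [NormedAddCommGroup E] [InnerProductSpace ℝ E] [FiniteDimensional ℝ E]
  [MeasurableSpace E] [BorelSpace E]

theorem setIntegral_sub_norm_sq_pow {m : ℕ} (hm : 0 < m) (hE : finrank ℝ E = 2 * m) (p : ℕ)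
    {c : ℝ} (hc : 0 ≤ c) :
    ∫ x in {x : E | ‖x‖ ^ 2 ≤ c}, (c - ‖x‖ ^ 2) ^ p
      = π ^ m * (p ! / (p + m)!) * c ^ (p + m) := by
  obtain ⟨n, rfl⟩ : ∃ n, m = n + 1 := ⟨m - 1, by omega⟩
  have : Nontrivial E := Module.nontrivial_of_finrank_pos (R := ℝ) (by omega)
  have hball : volume.real (Metric.ball (0 : E) 1) = π ^ (n + 1) / (n + 1)! := by
    rw [measureReal_def, InnerProductSpace.volume_ball_of_dim_even hE, ENNReal.ofReal_one,
      one_pow, one_mul, ENNReal.toReal_ofReal (by positivity)]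
  have hradial : ∫ y in Ioi (0 : ℝ),
        y ^ (finrank ℝ E - 1) • (Iic √c).indicator (fun t ↦ (c - t ^ 2) ^ p) y
      = ∫ y in (0 : ℝ)..√c, y ^ (2 * n + 1) * (c - y ^ 2) ^ p := by
    simp_rw [hE, show 2 * (n + 1) - 1 = 2 * n + 1 by omega,
      ← indicator_smul_apply _ (fun y : ℝ ↦ y ^ (2 * n + 1)), smul_eq_mul]
    rw [setIntegral_indicator measurableSet_Iic, Ioi_inter_Iic,
      intervalIntegral.integral_of_le (sqrt_nonneg c)]
  calc ∫ x in {x : E | ‖x‖ ^ 2 ≤ c}, (c - ‖x‖ ^ 2) ^ p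
      = ∫ x : E, (Iic √c).indicator (fun t ↦ (c - t ^ 2) ^ p) ‖x‖ := by
        have hset : {x : E | ‖x‖ ^ 2 ≤ c} = {x | ‖x‖ ≤ √c} := by
          ext x; simp [Real.le_sqrt (norm_nonneg x) hc]
        rw [hset, ← integral_indicator (measurableSet_le (by fun_prop) (by fun_prop))]
        rfl
    _ = finrank ℝ E * (π ^ (n + 1) / (n + 1)!)
          * (n ! * p ! / (2 * (n + p + 1)!) * c ^ (n + p + 1)) := by
        rw [integral_fun_norm_addHaar, hball, hradial, integral_pow_mul_sub_sq_pow hc,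
          nsmul_eq_mul, smul_eq_mul, mul_assoc]
    _ = π ^ (n + 1) * (p ! / (p + (n + 1))!) * c ^ (p + (n + 1)) := by
        rw [hE, show p + (n + 1) = n + p + 1 by ring, Nat.factorial_succ n]
        push_cast
        field_simp

end InnerProductSpace

section ComplexPi

variable (ι : Type*)

noncomputable def complexPiToEuclidean : (ι → ℂ) ≃ᵐ EuclideanSpace ℝ (ι ⊕ ι) :=
  (MeasurableEquiv.piCongrRight fun _ ↦ Complex.measurableEquivRealProd).trans <|
    (MeasurableEquiv.arrowProdEquivProdArrow ℝ ℝ ι).trans <|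
      (MeasurableEquiv.sumPiEquivProdPi fun _ ↦ ℝ).symm.trans <|
        MeasurableEquiv.toLp 2 (ι ⊕ ι → ℝ)

theorem measurePreserving_complexPiToEuclidean [Fintype ι] :
    MeasurePreserving (complexPiToEuclidean ι) :=
  (volume_preserving_pi fun _ ↦ Complex.volume_preserving_equiv_real_prod).trans <|
    (volume_measurePreserving_arrowProdEquivProdArrow ℝ ℝ ι).trans <|
      (volume_measurePreserving_sumPiEquivProdPi_symm fun _ ↦ ℝ).trans <|
        (EuclideanSpace.volume_preserving_symm_measurableEquiv_toLp (ι ⊕ ι)).symm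

variable {ι}

@[simp]
theorem complexPiToEuclidean_apply_inl (v : ι → ℂ) (i : ι) :
    complexPiToEuclidean ι v (Sum.inl i) = (v i).re :=
  rfl

@[simp]
theorem complexPiToEuclidean_apply_inr (v : ι → ℂ) (i : ι) :
    complexPiToEuclidean ι v (Sum.inr i) = (v i).im :=
  rfl

theorem norm_complexPiToEuclidean_sq [Fintype ι] (v : ι → ℂ) :
    ‖complexPiToEuclidean ι v‖ ^ 2 = ∑ i, Complex.normSq (v i) := by
  rw [EuclideanSpace.norm_sq_eq, Fintype.sum_sum_type, ← Finset.sum_add_distrib]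
  simp [Complex.normSq_apply, sq]

end ComplexPi

/-- The ball integral `∫_{‖v‖² ≤ c} (c − ‖v‖²)^p dv = π^m p!/(p+m)! c^{p+m}`
over `ℂ^m`. -/
theorem stmt_4 (m : ℕ) (hm : 0 < m) (p : ℕ) (c : ℝ) (hc : 0 ≤ c) :
    (∫ v : Fin m → ℂ in {v | (∑ i, Complex.normSq (v i)) ≤ c},
        (c - ∑ i, Complex.normSq (v i)) ^ p)
      = Real.pi ^ m * ((p.factorial : ℝ) / ((p + m).factorial : ℝ)) * c ^ (p + m) := by
  have hdim : finrank ℝ (EuclideanSpace ℝ (Fin m ⊕ Fin m)) = 2 * m := by simp [two_mul]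
  simp_rw [← norm_complexPiToEuclidean_sq]
  exact ((measurePreserving_complexPiToEuclidean (Fin m)).setIntegral_preimage_emb
    (MeasurableEquiv.measurableEmbedding _) (fun x ↦ (c - ‖x‖ ^ 2) ^ p) {x | ‖x‖ ^ 2 ≤ c}).trans
    (setIntegral_sub_norm_sq_pow hm hdim p hc)
end

section
/- Let n be a positive integer, P_1 > 0 a real number, Γ an n×n real diagonal matrix, and G an n×n strictly upper-triangular complex matrix. If the Hermitian matrix Γ + √P_1·(G + G*) is negative semidefinite, then every diagonal entry of Γ is ≤ 0 and Tr(G G*) ≤ (1/P_1)·(Tr Γ)². -/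
open Matrix
open scoped BigOperators ComplexOrder

/-!
The 2 × 2 principal minors of a positive semidefinite matrix are nonnegative, so its entries
satisfy `|A i j|² ≤ A i i * A j j`. Applied to `-(Γ + √P₁ (G + G*))`, whose diagonal is `-Γ` and
whose entries above the diagonal are `-√P₁ G i j`, this gives `γ i ≤ 0` and
`P₁ |G i j|² ≤ γ i γ j` for all `i, j` (trivially when `G i j = 0`); summing over `i, j` bounds
`P₁ Tr(G G*)` by `(∑ i, γ i)²`.
-/

theorem Matrix.PosSemidef.norm_apply_sq_le {𝕜 n : Type*} [RCLike 𝕜] [Fintype n]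
    {A : Matrix n n 𝕜} (hA : A.PosSemidef) (i j : n) :
    ‖A i j‖ ^ 2 ≤ RCLike.re (A i i) * RCLike.re (A j j) := by
  classical
  have hdet := (hA.submatrix ![i, j]).det_nonneg
  rw [det_fin_two] at hdet
  simp only [submatrix_apply, Matrix.cons_val_zero, Matrix.cons_val_one] at hdet
  rw [← hA.isHermitian.coe_re_apply_self i, ← hA.isHermitian.coe_re_apply_self j,
    ← hA.isHermitian.apply j i, RCLike.star_def, RCLike.mul_conj, ← RCLike.ofReal_pow,
    ← RCLike.ofReal_mul, ← RCLike.ofReal_sub, RCLike.ofReal_nonneg, sub_nonneg] at hdet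
  exact hdet

theorem Matrix.re_trace_mul_conjTranspose {𝕜 m n : Type*} [RCLike 𝕜] [Fintype m] [Fintype n]
    (G : Matrix m n 𝕜) : RCLike.re (G * Gᴴ).trace = ∑ i, ∑ j, ‖G i j‖ ^ 2 := by
  simp only [trace, diag_apply, mul_apply, conjTranspose_apply, RCLike.star_def, RCLike.mul_conj,
    map_sum, ← RCLike.ofReal_pow, RCLike.ofReal_re]

section DiagonalAddHermitianPart

variable {α n : Type*} [Semiring α] [StarRing α] [DecidableEq n]
  (d : n → α) (c : α) {G : Matrix n n α}

theorem Matrix.diagonal_add_smul_add_conjTranspose_apply_self {i : n} (hG : G i i = 0) :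
    (diagonal d + c • (G + Gᴴ)) i i = d i := by
  simp [hG]

theorem Matrix.diagonal_add_smul_add_conjTranspose_apply_of_ne {i j : n} (hij : i ≠ j)
    (hG : G j i = 0) : (diagonal d + c • (G + Gᴴ)) i j = c * G i j := by
  simp [hij, hG]

end DiagonalAddHermitianPart

theorem stmt_7_general (n : ℕ) (P1 : ℝ) (hP1 : 0 < P1)
    (γ : Fin n → ℝ) (G : Matrix (Fin n) (Fin n) ℂ)
    (hG : ∀ i j : Fin n, ¬ i < j → G i j = 0)
    (hns : (-(Matrix.diagonal (fun i => (γ i : ℂ))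
        + (Real.sqrt P1 : ℂ) • (G + Gᴴ))).PosSemidef) :
    (∀ i, γ i ≤ 0) ∧ (G * Gᴴ).trace.re ≤ (1 / P1) * (∑ i, γ i) ^ 2 := by
  have hdiag (i : Fin n) := diagonal_add_smul_add_conjTranspose_apply_self (fun i => (γ i : ℂ))
    (Real.sqrt P1 : ℂ) (hG i i (lt_irrefl i))
  have hγ (i : Fin n) : γ i ≤ 0 := by
    have h := hns.diag_nonneg (i := i)
    rw [Matrix.neg_apply, hdiag, ← Complex.ofReal_neg, Complex.zero_le_real] at h
    linarith
  have hentry (i j : Fin n) : P1 * ‖G i j‖ ^ 2 ≤ γ i * γ j := by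
    rcases lt_or_ge i j with hij | hji
    · have h := hns.norm_apply_sq_le i j
      rw [Matrix.neg_apply, Matrix.neg_apply, Matrix.neg_apply, hdiag, hdiag,
        diagonal_add_smul_add_conjTranspose_apply_of_ne _ _ hij.ne (hG j i hij.not_gt)] at h
      simpa [norm_mul, mul_pow, Real.sq_sqrt hP1.le] using h
    · rw [hG i j hji.not_gt, norm_zero, zero_pow two_ne_zero, mul_zero]
      exact mul_nonneg_of_nonpos_of_nonpos (hγ i) (hγ j)
  refine ⟨hγ, ?_⟩
  rw [← RCLike.re_to_complex, re_trace_mul_conjTranspose, one_div, inv_mul_eq_div,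
    le_div_iff₀' hP1, sq, Finset.sum_mul_sum]
  simp_rw [Finset.mul_sum]
  exact Finset.sum_le_sum fun i _ => Finset.sum_le_sum fun j _ => hentry i j

/-- Inequality (3.100) of the paper: if `Γ + √P₁(G + G*)` is negative
semidefinite (with `Γ` real diagonal and `G` strictly upper triangular), then
the diagonal entries of `Γ` are nonpositive and `Tr(G G*) ≤ (Tr Γ)²/P₁`. -/
theorem stmt_7 (n : ℕ) (hn : 0 < n) (P1 : ℝ) (hP1 : 0 < P1)
    (γ : Fin n → ℝ) (G : Matrix (Fin n) (Fin n) ℂ)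
    (hG : ∀ i j : Fin n, ¬ i < j → G i j = 0)
    (hns : (-(Matrix.diagonal (fun i => (γ i : ℂ))
        + (Real.sqrt P1 : ℂ) • (G + Gᴴ))).PosSemidef) :
    (∀ i, γ i ≤ 0) ∧ (G * Gᴴ).trace.re ≤ (1 / P1) * (∑ i, γ i) ^ 2 :=
  stmt_7_general n P1 hP1 γ G hG hns
end

section
/- Let n be a positive integer, χ ∈ ℂ, Ẑ = diag(ẑ_1, …, ẑ_n) an n×n complex diagonal matrix, and Y, T arbitrary n×n complex matrices. Define the n²×n² matrices F_{1,1} = −conjugate(χ)·Ẑ² ⊗ I_n − Ẑ ⊗ ( conjugate(χ)·Ẑ + Ẑ* + T* + conjugate(χ)·T ), F_{1,2} = Y* ⊗ ( χ·(Ẑ* + T*) + (Ẑ + T) ), and K_{1,1} = −I_n ⊗ ( conjugate(χ)·(Ẑ + T) + Ẑ* + T* ) − conjugate(χ)·Ẑ ⊗ I_n, and define the 2n²×2n² block matrix h = [[ (Y*Y) ⊗ I_n + F_{1,1} , F_{1,2} + (Ẑ Y* + χ Y* Ẑ*) ⊗ I_n ], [ −F_{1,2}* − (Ẑ* Y + conjugate(χ)·Y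 Ẑ) ⊗ I_n , (Y Y*) ⊗ I_n + F_{1,1}* ]]. Then h equals the product of block matrices [[ Ẑ ⊗ I_n , −Y* ⊗ I_n ], [ Y ⊗ I_n , Ẑ* ⊗ I_n ]] · [[ K_{1,1} , Y* ⊗ I_n ], [ −Y ⊗ I_n , K_{1,1}* ]]; consequently det(h) = ( det [[ Ẑ , −Y* ], [ Y , Ẑ* ]] )^{n} · det [[ K_{1,1} , Y* ⊗ I_n ], [ −Y ⊗ I_n , K_{1,1}* ]]. -/
open Matrix
open scoped Kronecker

/-! Both claims are block-matrix bookkeeping. Expanding the product of the two block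
matrices with the mixed-product rule `(A ⊗ B) * (C ⊗ D) = (A * C) ⊗ (B * D)` reproduces the four
blocks of `h` term by term. The first factor is, after the reindexing
`(n ⊕ n) × n ≃ n × n ⊕ n × n`, the Kronecker product `[[Ẑ, -Y*], [Y, Ẑ*]] ⊗ Iₙ`, whose
determinant is `det [[Ẑ, -Y*], [Y, Ẑ*]] ^ n`. -/

namespace Matrix

variable {R l m n p l' m' : Type*}

theorem neg_kronecker [Mul R] [HasDistribNeg R] (A : Matrix l m R) (B : Matrix n p R) :
    (-A) ⊗ₖ B = -(A ⊗ₖ B) :=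
  ext fun _ _ => neg_mul _ _

theorem fromBlocks_kronecker [Mul R] (A : Matrix l m R) (B : Matrix l m' R) (C : Matrix l' m R)
    (D : Matrix l' m' R) (E : Matrix n p R) :
    fromBlocks A B C D ⊗ₖ E =
      (fromBlocks (A ⊗ₖ E) (B ⊗ₖ E) (C ⊗ₖ E) (D ⊗ₖ E)).submatrix
        (Equiv.sumProdDistrib l l' n) (Equiv.sumProdDistrib m m' p) := by
  ext ⟨i | i, k⟩ ⟨j | j, k'⟩ <;> rfl

theorem det_fromBlocks_kronecker [CommRing R] [Fintype m] [Fintype m'] [Fintype n]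
    [DecidableEq m] [DecidableEq m'] [DecidableEq n] (A : Matrix m m R) (B : Matrix m m' R)
    (C : Matrix m' m R) (D : Matrix m' m' R) (E : Matrix n n R) :
    (fromBlocks (A ⊗ₖ E) (B ⊗ₖ E) (C ⊗ₖ E) (D ⊗ₖ E)).det =
      (fromBlocks A B C D).det ^ Fintype.card n * E.det ^ Fintype.card (m ⊕ m') := by
  rw [← det_kronecker, fromBlocks_kronecker, det_submatrix_equiv_self]

end Matrix

theorem h_eq_fromBlocks_mul_fromBlocks {R ι : Type*} [CommRing R] [StarRing R] [Fintype ι]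
    [DecidableEq ι] (χ : R) (Y T Z : Matrix ι ι R) :
    fromBlocks
        ((Yᴴ * Y) ⊗ₖ (1 : Matrix ι ι R) +
          (-(starRingEnd R χ • ((Z ^ 2) ⊗ₖ (1 : Matrix ι ι R)))
            - Z ⊗ₖ (starRingEnd R χ • Z + Zᴴ + Tᴴ + starRingEnd R χ • T)))
        (Yᴴ ⊗ₖ (χ • (Zᴴ + Tᴴ) + (Z + T)) + (Z * Yᴴ + χ • (Yᴴ * Zᴴ)) ⊗ₖ (1 : Matrix ι ι R))
        (-(Yᴴ ⊗ₖ (χ • (Zᴴ + Tᴴ) + (Z + T)))ᴴ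
          - (Zᴴ * Y + starRingEnd R χ • (Y * Z)) ⊗ₖ (1 : Matrix ι ι R))
        ((Y * Yᴴ) ⊗ₖ (1 : Matrix ι ι R) +
          (-(starRingEnd R χ • ((Z ^ 2) ⊗ₖ (1 : Matrix ι ι R)))
            - Z ⊗ₖ (starRingEnd R χ • Z + Zᴴ + Tᴴ + starRingEnd R χ • T))ᴴ) =
      fromBlocks
          (Z ⊗ₖ (1 : Matrix ι ι R)) (-(Yᴴ ⊗ₖ (1 : Matrix ι ι R)))
          (Y ⊗ₖ (1 : Matrix ι ι R)) (Zᴴ ⊗ₖ (1 : Matrix ι ι R)) *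
        fromBlocks
          (-((1 : Matrix ι ι R) ⊗ₖ (starRingEnd R χ • (Z + T) + Zᴴ + Tᴴ))
            - starRingEnd R χ • (Z ⊗ₖ (1 : Matrix ι ι R)))
          (Yᴴ ⊗ₖ (1 : Matrix ι ι R))
          (-(Y ⊗ₖ (1 : Matrix ι ι R)))
          (-((1 : Matrix ι ι R) ⊗ₖ (starRingEnd R χ • (Z + T) + Zᴴ + Tᴴ))
            - starRingEnd R χ • (Z ⊗ₖ (1 : Matrix ι ι R)))ᴴ := by
  rw [fromBlocks_multiply]
  congr 1 <;>
  · simp only [pow_two, starRingEnd_apply, star_star, conjTranspose_sub, conjTranspose_add,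
      conjTranspose_neg, conjTranspose_smul, conjTranspose_mul, conjTranspose_one,
      conjTranspose_conjTranspose, conjTranspose_kronecker, Matrix.mul_add, Matrix.mul_sub,
      Matrix.neg_mul, Matrix.mul_neg, mul_smul_comm, add_kronecker, kronecker_add,
      smul_kronecker, kronecker_smul, ← mul_kronecker_mul, Matrix.one_mul, Matrix.mul_one]
    module

theorem stmt_17_general (n : ℕ) (χ : ℂ)
    (Y T : Matrix (Fin n) (Fin n) ℂ)
    (Z : Matrix (Fin n) (Fin n) ℂ)
    (F11 F12 K11 : Matrix (Fin n × Fin n) (Fin n × Fin n) ℂ)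
    (hF11 : F11 = -((starRingEnd ℂ χ) • ((Z ^ 2) ⊗ₖ (1 : Matrix (Fin n) (Fin n) ℂ)))
        - Z ⊗ₖ ((starRingEnd ℂ χ) • Z + Zᴴ + Tᴴ + (starRingEnd ℂ χ) • T))
    (hF12 : F12 = Yᴴ ⊗ₖ (χ • (Zᴴ + Tᴴ) + (Z + T)))
    (hK11 : K11 = -((1 : Matrix (Fin n) (Fin n) ℂ)
          ⊗ₖ ((starRingEnd ℂ χ) • (Z + T) + Zᴴ + Tᴴ))
        - (starRingEnd ℂ χ) • (Z ⊗ₖ (1 : Matrix (Fin n) (Fin n) ℂ)))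
    (h : Matrix ((Fin n × Fin n) ⊕ (Fin n × Fin n))
        ((Fin n × Fin n) ⊕ (Fin n × Fin n)) ℂ)
    (hh : h = Matrix.fromBlocks
        ((Yᴴ * Y) ⊗ₖ (1 : Matrix (Fin n) (Fin n) ℂ) + F11)
        (F12 + (Z * Yᴴ + χ • (Yᴴ * Zᴴ)) ⊗ₖ (1 : Matrix (Fin n) (Fin n) ℂ))
        (-F12ᴴ - (Zᴴ * Y + (starRingEnd ℂ χ) • (Y * Z))
            ⊗ₖ (1 : Matrix (Fin n) (Fin n) ℂ))
        ((Y * Yᴴ) ⊗ₖ (1 : Matrix (Fin n) (Fin n) ℂ) + F11ᴴ)) :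
    h = Matrix.fromBlocks
        (Z ⊗ₖ (1 : Matrix (Fin n) (Fin n) ℂ)) (-(Yᴴ ⊗ₖ (1 : Matrix (Fin n) (Fin n) ℂ)))
        (Y ⊗ₖ (1 : Matrix (Fin n) (Fin n) ℂ)) (Zᴴ ⊗ₖ (1 : Matrix (Fin n) (Fin n) ℂ))
      * Matrix.fromBlocks
        K11 (Yᴴ ⊗ₖ (1 : Matrix (Fin n) (Fin n) ℂ))
        (-(Y ⊗ₖ (1 : Matrix (Fin n) (Fin n) ℂ))) K11ᴴ
    ∧ h.det = (Matrix.fromBlocks Z (-Yᴴ) Y Zᴴ).det ^ n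
        * (Matrix.fromBlocks
            K11 (Yᴴ ⊗ₖ (1 : Matrix (Fin n) (Fin n) ℂ))
            (-(Y ⊗ₖ (1 : Matrix (Fin n) (Fin n) ℂ))) K11ᴴ).det := by
  subst hh hF11 hF12 hK11
  have hfact := h_eq_fromBlocks_mul_fromBlocks χ Y T Z
  refine ⟨hfact, ?_⟩
  rw [hfact, det_mul, ← neg_kronecker, det_fromBlocks_kronecker, det_one, one_pow, mul_one,
    Fintype.card_fin]

/-- Remark 1.5 of the paper: with `W = 0`, the matrix `h(0, T, Y)` factors as a
product of two block matrices, and consequently its determinant is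
`(det [[Ẑ, −Y*], [Y, Ẑ*]])ⁿ · det [[K₁₁, Y*⊗I], [−Y⊗I, K₁₁*]]`. -/
theorem stmt_17 (n : ℕ) (hn : 0 < n) (χ : ℂ) (zh : Fin n → ℂ)
    (Y T : Matrix (Fin n) (Fin n) ℂ)
    (Z : Matrix (Fin n) (Fin n) ℂ) (hZ : Z = Matrix.diagonal zh)
    (F11 F12 K11 : Matrix (Fin n × Fin n) (Fin n × Fin n) ℂ)
    (hF11 : F11 = -((starRingEnd ℂ χ) • ((Z ^ 2) ⊗ₖ (1 : Matrix (Fin n) (Fin n) ℂ)))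
        - Z ⊗ₖ ((starRingEnd ℂ χ) • Z + Zᴴ + Tᴴ + (starRingEnd ℂ χ) • T))
    (hF12 : F12 = Yᴴ ⊗ₖ (χ • (Zᴴ + Tᴴ) + (Z + T)))
    (hK11 : K11 = -((1 : Matrix (Fin n) (Fin n) ℂ)
          ⊗ₖ ((starRingEnd ℂ χ) • (Z + T) + Zᴴ + Tᴴ))
        - (starRingEnd ℂ χ) • (Z ⊗ₖ (1 : Matrix (Fin n) (Fin n) ℂ)))
    (h : Matrix ((Fin n × Fin n) ⊕ (Fin n × Fin n))
        ((Fin n × Fin n) ⊕ (Fin n × Fin n)) ℂ)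
    (hh : h = Matrix.fromBlocks
        ((Yᴴ * Y) ⊗ₖ (1 : Matrix (Fin n) (Fin n) ℂ) + F11)
        (F12 + (Z * Yᴴ + χ • (Yᴴ * Zᴴ)) ⊗ₖ (1 : Matrix (Fin n) (Fin n) ℂ))
        (-F12ᴴ - (Zᴴ * Y + (starRingEnd ℂ χ) • (Y * Z))
            ⊗ₖ (1 : Matrix (Fin n) (Fin n) ℂ))
        ((Y * Yᴴ) ⊗ₖ (1 : Matrix (Fin n) (Fin n) ℂ) + F11ᴴ)) :
    h = Matrix.fromBlocks
        (Z ⊗ₖ (1 : Matrix (Fin n) (Fin n) ℂ)) (-(Yᴴ ⊗ₖ (1 : Matrix (Fin n) (Fin n) ℂ)))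
        (Y ⊗ₖ (1 : Matrix (Fin n) (Fin n) ℂ)) (Zᴴ ⊗ₖ (1 : Matrix (Fin n) (Fin n) ℂ))
      * Matrix.fromBlocks
        K11 (Yᴴ ⊗ₖ (1 : Matrix (Fin n) (Fin n) ℂ))
        (-(Y ⊗ₖ (1 : Matrix (Fin n) (Fin n) ℂ))) K11ᴴ
    ∧ h.det = (Matrix.fromBlocks Z (-Yᴴ) Y Zᴴ).det ^ n
        * (Matrix.fromBlocks
            K11 (Yᴴ ⊗ₖ (1 : Matrix (Fin n) (Fin n) ℂ))
            (-(Y ⊗ₖ (1 : Matrix (Fin n) (Fin n) ℂ))) K11ᴴ).det :=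
  stmt_17_general n χ Y T Z F11 F12 K11 hF11 hF12 hK11 h hh
end
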